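/- arXiv:2603.05823 — 2 statements merged into one kernel-verified Lean document; each statement's English description precedes it below -/
import Mathlib

section
/- Let H₁ = (1 + E(−4))·(1 − E(−6))·(1 − E(−4))·(1 − E(12)) and H₂ = (1 + E(−2))·(1 − E(−2))·(1 − E(−10))·(1 − E(10)) in ℚ[[λ]]. Then the following three identities hold: (i) 2 · (7/4) · ( (144/22) · c₃(H₁)/((−12)·48) + (100/22) · c₃(H₂)/((−10)·(−40)) ) = 7; (ii) 2 · (7/4) · ( 12 · c₄(H₁)/((−12)·48) + 10 · c₄(H₂)/((−10)·(−40)) ) = 28; (iii) 2 · (7/4) · ( c₅(H₁)/((−12)·48) + c₅(H₂)/((−10)·(−40)) ) = −7/6. (These are the localization computations of the degree-2 invariants ⟨τ₀(h₂)⟩₂ = 7, ⟨τ₁(h₁)⟩₂ = 28, ⟨τ₂(1)⟩₂ = −7/6 of the local Calabi–Yau 4-fold over the Mukai–Umemura threefold.) -/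
/-- `E a` is the exponential power series `∑ aⁿ λⁿ / n!` in `ℚ[[λ]]`. -/
noncomputable def E (a : ℤ) : PowerSeries ℚ :=
  PowerSeries.mk fun n => (a : ℚ) ^ n / n.factorial

/-- `c k F` is the coefficient of `λ^k` in `F ∈ ℚ[[λ]]`. -/
noncomputable def c (k : ℕ) (F : PowerSeries ℚ) : ℚ := PowerSeries.coeff k F

/-! Since `E` turns sums into products, `(1 + E(-4))(1 - E(-4)) = 1 - E(-8)` and both `H₁` and
`H₂` are products `(1 - E a)(1 - E b)(1 - E c)`. Expanding such a product gives a signed sum of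
exponentials `E s` over the subset sums `s` of `{a, b, c}`, whose `λ^k`-coefficients are `s^k / k!`;
the three identities are then finite rational arithmetic. -/

open PowerSeries

theorem E_eq_rescale_exp (a : ℤ) : E a = rescale (a : ℚ) (exp ℚ) := by
  ext n
  simp [E, coeff_rescale, coeff_exp, div_eq_mul_inv]

theorem E_mul_E (a b : ℤ) : E a * E b = E (a + b) := by
  simp only [E_eq_rescale_exp, exp_mul_exp_eq_exp_add, Int.cast_add]

theorem one_add_E_mul_one_sub_E (a : ℤ) : (1 + E a) * (1 - E a) = 1 - E (2 * a) := by
  rw [two_mul, ← E_mul_E]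
  ring

theorem one_sub_E_mul_one_sub_E_mul_one_sub_E (a b d : ℤ) :
    (1 - E a) * (1 - E b) * (1 - E d) =
      1 - E a - E b - E d + E (a + b) + E (a + d) + E (b + d) - E (a + b + d) := by
  simp only [← E_mul_E]
  ring

theorem c_one_sub_E_mul_one_sub_E_mul_one_sub_E {k : ℕ} (hk : k ≠ 0) (a b d : ℤ) :
    c k ((1 - E a) * (1 - E b) * (1 - E d)) =
      ((a + b : ℚ) ^ k + (a + d : ℚ) ^ k + (b + d : ℚ) ^ k
        - (a : ℚ) ^ k - (b : ℚ) ^ k - (d : ℚ) ^ k - (a + b + d : ℚ) ^ k) / k.factorial := by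
  rw [one_sub_E_mul_one_sub_E_mul_one_sub_E]
  simp only [c, map_add, map_sub, coeff_one, if_neg hk, E, coeff_mk, Int.cast_add]
  ring

/-- Localization computations of the degree-2 invariants `⟨τ₀(h₂)⟩₂ = 7`,
`⟨τ₁(h₁)⟩₂ = 28`, `⟨τ₂(1)⟩₂ = −7/6` of the local Calabi–Yau 4-fold over the
Mukai–Umemura threefold. -/
theorem stmt_14 :
    let H₁ : PowerSeries ℚ := (1 + E (-4)) * (1 - E (-6)) * (1 - E (-4)) * (1 - E 12)
    let H₂ : PowerSeries ℚ := (1 + E (-2)) * (1 - E (-2)) * (1 - E (-10)) * (1 - E 10)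
    (2 * (7 / 4) * ((144 / 22) * c 3 H₁ / ((-12) * 48)
        + (100 / 22) * c 3 H₂ / ((-10) * (-40))) = (7 : ℚ))
    ∧ (2 * (7 / 4) * (12 * c 4 H₁ / ((-12) * 48)
        + 10 * c 4 H₂ / ((-10) * (-40))) = (28 : ℚ))
    ∧ (2 * (7 / 4) * (c 5 H₁ / ((-12) * 48)
        + c 5 H₂ / ((-10) * (-40))) = (-7 / 6 : ℚ)) := by
  intro H₁ H₂
  have hH₁ : H₁ = (1 - E (-8)) * (1 - E (-6)) * (1 - E 12) := by
    calc H₁ = (1 + E (-4)) * (1 - E (-4)) * (1 - E (-6)) * (1 - E 12) := by ring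
      _ = _ := by rw [one_add_E_mul_one_sub_E]; rfl
  have hH₂ : H₂ = (1 - E (-4)) * (1 - E (-10)) * (1 - E 10) := by
    change (1 + E (-2)) * (1 - E (-2)) * _ * _ = _
    rw [one_add_E_mul_one_sub_E]; rfl
  simp only [hH₁, hH₂, c_one_sub_E_mul_one_sub_E_mul_one_sub_E, ne_eq, OfNat.ofNat_ne_zero,
    not_false_eq_true]
  norm_num [Nat.factorial]
end

section
/- Let K₁ = (1 + E(−4) + E(−6))·(1 − E(−6))·(1 − E(−4))·(1 − E(12)) and K₂ = (1 + E(−2) + E(−4))·(1 − E(−2))·(1 − E(−10))·(1 − E(10)) in ℚ[[λ]]. Then the following three identities hold: (i) 2 · (14/3) · ( (144/22) · c₃(K₁)/((−12)·48) + (100/22) · c₃(K₂)/((−10)·(−40)) ) = 28; (ii) 2 · (14/3) · ( 12 · c₄(K₁)/((−12)·48) + 10 · c₄(K₂)/((−10)·(−40)) ) = 28; (iii) 2 · (14/3) · ( c₅(K₁)/((−12)·48) + c₅(K₂)/((−10)·(−40)) ) = −14/3. (These are the localization computations of the degree-3 invariants ⟨τ₀(h₂)⟩₃ = 28, ⟨τ₁(h₁)⟩₃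 = 28, ⟨τ₂(1)⟩₃ = −14/3 of the local Calabi–Yau 4-fold over the Mukai–Umemura threefold.) -/
open PowerSeries

lemma c_E (k : ℕ) (a : ℤ) : c k (E a) = (a : ℚ) ^ k / k.factorial :=
  coeff_mk _ _

lemma c_one (k : ℕ) : c k 1 = if k = 0 then 1 else 0 :=
  coeff_one k

lemma c_add (k : ℕ) (F G : PowerSeries ℚ) : c k (F + G) = c k F + c k G :=
  map_add _ F G

lemma c_sub (k : ℕ) (F G : PowerSeries ℚ) : c k (F - G) = c k F - c k G :=
  map_sub _ F G

lemma c_mul (k : ℕ) (F G : PowerSeries ℚ) :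
    c k (F * G) = ∑ i ∈ Finset.range (k + 1), c i F * c (k - i) G := by
  rw [c, coeff_mul, Finset.Nat.sum_antidiagonal_eq_sum_range_succ_mk]
  rfl

noncomputable def seriesAtP₁₂ : PowerSeries ℚ :=
  (1 + E (-4) + E (-6)) * (1 - E (-6)) * (1 - E (-4)) * (1 - E 12)

noncomputable def seriesAtP₁₀ : PowerSeries ℚ :=
  (1 + E (-2) + E (-4)) * (1 - E (-2)) * (1 - E (-10)) * (1 - E 10)

lemma coeffs_seriesAtP₁₂ :
    c 3 seriesAtP₁₂ = -864 ∧ c 4 seriesAtP₁₂ = 2016 ∧ c 5 seriesAtP₁₂ = -12096 := by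
  refine ⟨?_, ?_, ?_⟩ <;>
    simp only [seriesAtP₁₂, c_mul, c_add, c_sub, c_one, c_E,
      Finset.sum_range_succ, Finset.sum_range_zero] <;>
    norm_num [Nat.factorial]

lemma coeffs_seriesAtP₁₀ :
    c 3 seriesAtP₁₀ = -600 ∧ c 4 seriesAtP₁₀ = 1800 ∧ c 5 seriesAtP₁₀ = -8600 := by
  refine ⟨?_, ?_, ?_⟩ <;>
    simp only [seriesAtP₁₀, c_mul, c_add, c_sub, c_one, c_E,
      Finset.sum_range_succ, Finset.sum_range_zero] <;>
    norm_num [Nat.factorial]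

/-- Localization computations of the degree-3 invariants `⟨τ₀(h₂)⟩₃ = 28`,
`⟨τ₁(h₁)⟩₃ = 28`, `⟨τ₂(1)⟩₃ = −14/3` of the local Calabi–Yau 4-fold over the
Mukai–Umemura threefold. -/
theorem stmt_15 :
    let K₁ : PowerSeries ℚ :=
      (1 + E (-4) + E (-6)) * (1 - E (-6)) * (1 - E (-4)) * (1 - E 12)
    let K₂ : PowerSeries ℚ :=
      (1 + E (-2) + E (-4)) * (1 - E (-2)) * (1 - E (-10)) * (1 - E 10)
    (2 * (14 / 3) * ((144 / 22) * c 3 K₁ / ((-12) * 48)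
        + (100 / 22) * c 3 K₂ / ((-10) * (-40))) = (28 : ℚ))
    ∧ (2 * (14 / 3) * (12 * c 4 K₁ / ((-12) * 48)
        + 10 * c 4 K₂ / ((-10) * (-40))) = (28 : ℚ))
    ∧ (2 * (14 / 3) * (c 5 K₁ / ((-12) * 48)
        + c 5 K₂ / ((-10) * (-40))) = (-14 / 3 : ℚ)) := by
  intro K₁ K₂
  obtain ⟨h₃, h₄, h₅⟩ : c 3 K₁ = -864 ∧ c 4 K₁ = 2016 ∧ c 5 K₁ = -12096 :=
    coeffs_seriesAtP₁₂
  obtain ⟨h₃', h₄', h₅'⟩ : c 3 K₂ = -600 ∧ c 4 K₂ = 1800 ∧ c 5 K₂ = -8600 :=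
    coeffs_seriesAtP₁₀
  rw [h₃, h₄, h₅, h₃', h₄', h₅']
  norm_num
end
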